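/- Let M be a complex manifold with vanishing Dolbeault cohomology H^{p,q}_{∂̄}(M) = 0 for all q ≥ 1. If a d-closed (3,0)-form ω is exact as a smooth 3-form, ω = dα, then ω = dα^{(2,0)} for some (2,0)-form α^{(2,0)}; i.e., the natural map from {d-closed (3,0)-forms}/d(Ω^{2,0}) to the third de Rham cohomology H³_dR(M;ℂ) is injective. -/

import Mathlib

/-!
Staircase argument. The (0,3)-part of `ω = dα` says `∂̄α^{(0,2)} = 0`, so `α^{(0,2)} = ∂̄γ`.
Subtracting `dγ` from `α` kills the (0,2)-part and makes `α^{(1,1)} - ∂γ` `∂̄`-closed, hence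
equal to `∂̄g`; subtracting `dg` then leaves the (2,0)-form `α^{(2,0)} - ∂g`, which is
`∂̄`-closed and still satisfies `∂(α^{(2,0)} - ∂g) = ω` because `∂² = 0`.
-/

section StaircaseStep

variable {R P Q S T U : Type*} [Semiring R]
  [AddCommGroup P] [Module R P] [AddCommGroup Q] [Module R Q] [AddCommGroup S] [Module R S]
  [AddCommGroup T] [Module R T] [AddCommGroup U] [Module R U]

theorem dbar_sub_del_eq_zero {del₁ : P →ₗ[R] S} {dbar₁ : P →ₗ[R] Q} {del₂ : Q →ₗ[R] T}
    {dbar₂ : S →ₗ[R] T} (hanti : ∀ x, dbar₂ (del₁ x) + del₂ (dbar₁ x) = 0) {a : S} {γ : P}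
    (h : dbar₂ a + del₂ (dbar₁ γ) = 0) : dbar₂ (a - del₁ γ) = 0 := by
  rw [map_sub, sub_eq_zero]
  exact add_right_cancel (h.trans (hanti γ).symm)

theorem del_sub_del_eq {del₁ : P →ₗ[R] S} {del₃ : S →ₗ[R] U} (hdd : ∀ x, del₃ (del₁ x) = 0)
    (a : S) (γ : P) : del₃ (a - del₁ γ) = del₃ a := by
  rw [map_sub, hdd, sub_zero]

end StaircaseStep

theorem stmt_17_general (Ω01 Ω10 Ω02 Ω11 Ω20 Ω03 Ω12 Ω21 Ω30 : Type*)
    [AddCommGroup Ω01] [Module ℂ Ω01] [AddCommGroup Ω10] [Module ℂ Ω10]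
    [AddCommGroup Ω02] [Module ℂ Ω02] [AddCommGroup Ω11] [Module ℂ Ω11]
    [AddCommGroup Ω20] [Module ℂ Ω20] [AddCommGroup Ω03] [Module ℂ Ω03]
    [AddCommGroup Ω12] [Module ℂ Ω12] [AddCommGroup Ω21] [Module ℂ Ω21]
    [AddCommGroup Ω30] [Module ℂ Ω30]
    (pd01 : Ω01 →ₗ[ℂ] Ω11) (pd10 : Ω10 →ₗ[ℂ] Ω20) (pd02 : Ω02 →ₗ[ℂ] Ω12)
    (pd11 : Ω11 →ₗ[ℂ] Ω21) (pd20 : Ω20 →ₗ[ℂ] Ω30)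
    (db01 : Ω01 →ₗ[ℂ] Ω02) (db10 : Ω10 →ₗ[ℂ] Ω11) (db02 : Ω02 →ₗ[ℂ] Ω03)
    (db11 : Ω11 →ₗ[ℂ] Ω12) (db20 : Ω20 →ₗ[ℂ] Ω21)
    -- structural identities `∂² = 0` and `∂∂̄ + ∂̄∂ = 0`
    (hdd10 : ∀ x : Ω10, pd20 (pd10 x) = 0)
    (hdd01 : ∀ x : Ω01, pd11 (pd01 x) = 0)
    (hanti01 : ∀ x : Ω01, db11 (pd01 x) + pd02 (db01 x) = 0)
    (hanti10 : ∀ x : Ω10, db20 (pd10 x) + pd11 (db10 x) = 0)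
    -- vanishing of Dolbeault cohomology in positive ∂̄-degree
    (hex02 : ∀ b : Ω02, db02 b = 0 → ∃ g : Ω01, db01 g = b)
    (hex11 : ∀ b : Ω11, db11 b = 0 → ∃ g : Ω10, db10 g = b)
    -- a d-closed (3,0)-form ω which is d-exact: ω = dα with α = α20 + α11 + α02
    (ω : Ω30)
    (α20 : Ω20) (α11 : Ω11) (α02 : Ω02)
    (h30 : pd20 α20 = ω)
    (h21 : db20 α20 + pd11 α11 = 0)
    (h12 : db11 α11 + pd02 α02 = 0)
    (h03 : db02 α02 = 0) :
    ∃ α' : Ω20, pd20 α' = ω ∧ db20 α' = 0 := by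
  obtain ⟨γ, rfl⟩ := hex02 α02 h03
  obtain ⟨g, hg⟩ := hex11 (α11 - pd01 γ) (dbar_sub_del_eq_zero hanti01 h12)
  refine ⟨α20 - pd10 g, by rw [del_sub_del_eq hdd10, h30], dbar_sub_del_eq_zero hanti10 ?_⟩
  rw [hg, del_sub_del_eq hdd01, h21]

/-- Injectivity of `{d-closed (3,0)-forms}/d(Ω^{2,0}) → H³_dR` on a complex manifold
with vanishing positive-degree Dolbeault cohomology: if a d-closed (3,0)-form `ω` is
d-exact, `ω = d(α^{(2,0)} + α^{(1,1)} + α^{(0,2)})` (encoded by the bidegree components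
of the equation), then `ω = dα'` for some (2,0)-form `α'` (i.e. `∂α' = ω`, `∂̄α' = 0`). -/
theorem stmt_17 (Ω01 Ω10 Ω02 Ω11 Ω20 Ω03 Ω12 Ω21 Ω30 Ω31 : Type*)
    [AddCommGroup Ω01] [Module ℂ Ω01] [AddCommGroup Ω10] [Module ℂ Ω10]
    [AddCommGroup Ω02] [Module ℂ Ω02] [AddCommGroup Ω11] [Module ℂ Ω11]
    [AddCommGroup Ω20] [Module ℂ Ω20] [AddCommGroup Ω03] [Module ℂ Ω03]
    [AddCommGroup Ω12] [Module ℂ Ω12] [AddCommGroup Ω21] [Module ℂ Ω21]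
    [AddCommGroup Ω30] [Module ℂ Ω30] [AddCommGroup Ω31] [Module ℂ Ω31]
    (pd01 : Ω01 →ₗ[ℂ] Ω11) (pd10 : Ω10 →ₗ[ℂ] Ω20) (pd02 : Ω02 →ₗ[ℂ] Ω12)
    (pd11 : Ω11 →ₗ[ℂ] Ω21) (pd20 : Ω20 →ₗ[ℂ] Ω30)
    (db01 : Ω01 →ₗ[ℂ] Ω02) (db10 : Ω10 →ₗ[ℂ] Ω11) (db02 : Ω02 →ₗ[ℂ] Ω03)
    (db11 : Ω11 →ₗ[ℂ] Ω12) (db20 : Ω20 →ₗ[ℂ] Ω21) (db30 : Ω30 →ₗ[ℂ] Ω31)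
    -- structural identities `∂² = 0` and `∂∂̄ + ∂̄∂ = 0`
    (hdd10 : ∀ x : Ω10, pd20 (pd10 x) = 0)
    (hdd01 : ∀ x : Ω01, pd11 (pd01 x) = 0)
    (hanti01 : ∀ x : Ω01, db11 (pd01 x) + pd02 (db01 x) = 0)
    (hanti10 : ∀ x : Ω10, db20 (pd10 x) + pd11 (db10 x) = 0)
    -- vanishing of Dolbeault cohomology in positive ∂̄-degree
    (hex02 : ∀ b : Ω02, db02 b = 0 → ∃ g : Ω01, db01 g = b)
    (hex11 : ∀ b : Ω11, db11 b = 0 → ∃ g : Ω10, db10 g = b)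
    -- a d-closed (3,0)-form ω which is d-exact: ω = dα with α = α20 + α11 + α02
    (ω : Ω30) (hω : db30 ω = 0)
    (α20 : Ω20) (α11 : Ω11) (α02 : Ω02)
    (h30 : pd20 α20 = ω)
    (h21 : db20 α20 + pd11 α11 = 0)
    (h12 : db11 α11 + pd02 α02 = 0)
    (h03 : db02 α02 = 0) :
    ∃ α' : Ω20, pd20 α' = ω ∧ db20 α' = 0 :=
  stmt_17_general Ω01 Ω10 Ω02 Ω11 Ω20 Ω03 Ω12 Ω21 Ω30 pd01 pd10 pd02 pd11 pd20 db01 db10 db02 db11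
    db20 hdd10 hdd01 hanti01 hanti10 hex02 hex11 ω α20 α11 α02 h30 h21 h12 h03
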